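/- arXiv:1908.04496 — 2 statements merged into one kernel-verified Lean document; each statement's English description precedes it below -/
import Mathlib

section
/- The translation-reduced three-body Hamiltonian expressed in the new coordinates equals the partially reduced Hamiltonian: for every point z in the domain of Φ, H_old(Φ(z)) = (1/(2ν₁))(p₁² + p₂² + f̃(q₃,q₄)) + (1/(2ν₂))(p₃² + p₄² + f̃(q₁,q₂)) + V(q₁²+q₂², q₃²+q₄², q₁q₃+q₂q₄), where H_old(x₁,x₂,y₁,y₂) = ‖y₁‖²/(2ν₁) + ‖y₂‖²/(2ν₂) + V(‖x₁‖², ‖x₂‖², x₁·x₂) and f̃(q_i,q_j) = (q_iB − q_j p_ψ₁/(2A))² + (−q_jC + q_i p_ψ₂/(2A))². In particular the right-hand side is independent of the angles θ₁ and θ₂. -/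
/-!
Each factor of `M` is the exponential of a skew-symmetric matrix, so `M` is orthogonal and
`H_old` only sees the unrotated vectors `(q₁,q₂,0,0)`, `(q₃,q₄,0,0)`, `(p₁,p₂,α₁,α₂)`,
`(p₃,p₄,α₃,α₄)`; their squared norms and inner product are the terms of the right-hand side.
-/

open Matrix Real

noncomputable section

/-- `B_ij = E_ij - E_ji`. -/
def Bmat (i j : Fin 4) : Matrix (Fin 4) (Fin 4) ℝ :=
  Matrix.single i j 1 - Matrix.single j i 1

/-- `M = M_θ M_ψ = exp(θ₁B₁₂)exp(θ₂B₃₄)exp(ψ₁B₁₃)exp(ψ₂B₂₄) ∈ SO(4)`. -/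
def Mrot (θ₁ θ₂ ψ₁ ψ₂ : ℝ) : Matrix (Fin 4) (Fin 4) ℝ :=
  NormedSpace.exp (θ₁ • Bmat 0 1) * NormedSpace.exp (θ₂ • Bmat 2 3) *
    (NormedSpace.exp (ψ₁ • Bmat 0 2) * NormedSpace.exp (ψ₂ • Bmat 1 3))

/-- The transformation `Φ`, sending the new coordinates
`(q₁,q₂,q₃,q₄,ψ₁,ψ₂,θ₁,θ₂,p₁,p₂,p₃,p₄,p_ψ₁,p_ψ₂,p_θ₁,p_θ₂)` (indices 0,…,15 of `z`)
to `(x₁,x₂,y₁,y₂) ∈ (ℝ⁴)⁴`. -/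
def Phi (z : Fin 16 → ℝ) :
    (Fin 4 → ℝ) × (Fin 4 → ℝ) × (Fin 4 → ℝ) × (Fin 4 → ℝ) :=
  let q₁ := z 0; let q₂ := z 1; let q₃ := z 2; let q₄ := z 3
  let ψ₁ := z 4; let ψ₂ := z 5; let θ₁ := z 6; let θ₂ := z 7
  let p₁ := z 8; let p₂ := z 9; let p₃ := z 10; let p₄ := z 11
  let pψ₁ := z 12; let pψ₂ := z 13; let pθ₁ := z 14; let pθ₂ := z 15
  let A := (q₁ * q₄ - q₂ * q₃) / 2
  let L₃ := q₁ * p₂ - q₂ * p₁ + q₃ * p₄ - q₄ * p₃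
  let B := (L₃ * sin (2 * ψ₁) + 2 * (pθ₁ * sin ψ₁ * cos ψ₂ + pθ₂ * cos ψ₁ * sin ψ₂)) /
      (2 * A * (cos (2 * ψ₁) - cos (2 * ψ₂)))
  let C := (L₃ * sin (2 * ψ₂) + 2 * (pθ₁ * cos ψ₁ * sin ψ₂ + pθ₂ * sin ψ₁ * cos ψ₂)) /
      (2 * A * (cos (2 * ψ₁) - cos (2 * ψ₂)))
  let α₁ := q₃ * B - q₄ * pψ₁ / (2 * A)
  let α₂ := -q₄ * C + q₃ * pψ₂ / (2 * A)
  let α₃ := -q₁ * B + q₂ * pψ₁ / (2 * A)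
  let α₄ := q₂ * C - q₁ * pψ₂ / (2 * A)
  let M := Mrot θ₁ θ₂ ψ₁ ψ₂
  (M.mulVec ![q₁, q₂, 0, 0], M.mulVec ![q₃, q₄, 0, 0],
   M.mulVec ![p₁, p₂, α₁, α₂], M.mulVec ![p₃, p₄, α₃, α₄])

/-- The translation-reduced Hamiltonian
`H_old(x₁,x₂,y₁,y₂) = ‖y₁‖²/(2ν₁) + ‖y₂‖²/(2ν₂) + V(‖x₁‖², ‖x₂‖², x₁·x₂)`. -/
def Hold (ν₁ ν₂ : ℝ) (V : (Fin 3 → ℝ) → ℝ)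
    (w : (Fin 4 → ℝ) × (Fin 4 → ℝ) × (Fin 4 → ℝ) × (Fin 4 → ℝ)) : ℝ :=
  let x₁ := w.1; let x₂ := w.2.1; let y₁ := w.2.2.1; let y₂ := w.2.2.2
  (∑ i, (y₁ i) ^ 2) / (2 * ν₁) + (∑ i, (y₂ i) ^ 2) / (2 * ν₂) +
    V ![∑ i, (x₁ i) ^ 2, ∑ i, (x₂ i) ^ 2, ∑ i, x₁ i * x₂ i]

namespace Matrix

variable {n : Type*} [Fintype n] [DecidableEq n]

theorem exp_mem_orthogonalGroup_of_transpose_eq_neg {A : Matrix n n ℝ} (hA : Aᵀ = -A) :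
    NormedSpace.exp A ∈ orthogonalGroup n ℝ := by
  rw [mem_orthogonalGroup_iff', ← exp_transpose, hA,
    ← exp_add_of_commute _ _ (Commute.refl A).neg_left, neg_add_cancel, NormedSpace.exp_zero]

theorem dotProduct_mulVec_mulVec_of_mem_orthogonalGroup {R : Type*} [CommRing R]
    {M : Matrix n n R} (hM : M ∈ orthogonalGroup n R) (v w : n → R) :
    M *ᵥ v ⬝ᵥ M *ᵥ w = v ⬝ᵥ w := by
  rw [dotProduct_mulVec, ← mulVec_transpose, mulVec_mulVec, (mem_orthogonalGroup_iff' n R).mp hM,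
    one_mulVec]

end Matrix

theorem Bmat_transpose (i j : Fin 4) : (Bmat i j)ᵀ = -Bmat i j := by
  simp only [Bmat, transpose_sub, transpose_single, neg_sub]

theorem Mrot_mem_orthogonalGroup (θ₁ θ₂ ψ₁ ψ₂ : ℝ) :
    Mrot θ₁ θ₂ ψ₁ ψ₂ ∈ orthogonalGroup (Fin 4) ℝ := by
  have hexp (t : ℝ) (i j : Fin 4) : NormedSpace.exp (t • Bmat i j) ∈ orthogonalGroup (Fin 4) ℝ :=
    exp_mem_orthogonalGroup_of_transpose_eq_neg (by rw [transpose_smul, Bmat_transpose, smul_neg])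
  exact mul_mem (mul_mem (hexp _ _ _) (hexp _ _ _)) (mul_mem (hexp _ _ _) (hexp _ _ _))

theorem Hold_mulVec_of_mem_orthogonalGroup (ν₁ ν₂ : ℝ) (V : (Fin 3 → ℝ) → ℝ)
    {M : Matrix (Fin 4) (Fin 4) ℝ} (hM : M ∈ orthogonalGroup (Fin 4) ℝ)
    (x₁ x₂ y₁ y₂ : Fin 4 → ℝ) :
    Hold ν₁ ν₂ V (M *ᵥ x₁, M *ᵥ x₂, M *ᵥ y₁, M *ᵥ y₂) = Hold ν₁ ν₂ V (x₁, x₂, y₁, y₂) := by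
  have hdot (v w : Fin 4 → ℝ) : ∑ i, (M *ᵥ v) i * (M *ᵥ w) i = ∑ i, v i * w i :=
    dotProduct_mulVec_mulVec_of_mem_orthogonalGroup hM v w
  simp only [Hold, sq, hdot]

theorem Hold_comp_Phi_general (ν₁ ν₂ : ℝ) (V : (Fin 3 → ℝ) → ℝ) (z : Fin 16 → ℝ) :
    Hold ν₁ ν₂ V (Phi z) =
      (let q₁ := z 0; let q₂ := z 1; let q₃ := z 2; let q₄ := z 3
       let ψ₁ := z 4; let ψ₂ := z 5
       let p₁ := z 8; let p₂ := z 9; let p₃ := z 10; let p₄ := z 11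
       let pψ₁ := z 12; let pψ₂ := z 13; let pθ₁ := z 14; let pθ₂ := z 15
       let A := (q₁ * q₄ - q₂ * q₃) / 2
       let L₃ := q₁ * p₂ - q₂ * p₁ + q₃ * p₄ - q₄ * p₃
       let B := (L₃ * sin (2 * ψ₁) + 2 * (pθ₁ * sin ψ₁ * cos ψ₂ + pθ₂ * cos ψ₁ * sin ψ₂)) /
           (2 * A * (cos (2 * ψ₁) - cos (2 * ψ₂)))
       let C := (L₃ * sin (2 * ψ₂) + 2 * (pθ₁ * cos ψ₁ * sin ψ₂ + pθ₂ * sin ψ₁ * cos ψ₂)) /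
           (2 * A * (cos (2 * ψ₁) - cos (2 * ψ₂)))
       let ftilde : ℝ → ℝ → ℝ := fun qi qj =>
         (qi * B - qj * pψ₁ / (2 * A)) ^ 2 + (-qj * C + qi * pψ₂ / (2 * A)) ^ 2
       (1 / (2 * ν₁)) * (p₁ ^ 2 + p₂ ^ 2 + ftilde q₃ q₄) +
         (1 / (2 * ν₂)) * (p₃ ^ 2 + p₄ ^ 2 + ftilde q₁ q₂) +
         V ![q₁ ^ 2 + q₂ ^ 2, q₃ ^ 2 + q₄ ^ 2, q₁ * q₃ + q₂ * q₄]) := by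
  simp only [Phi]
  rw [Hold_mulVec_of_mem_orthogonalGroup _ _ _ (Mrot_mem_orthogonalGroup _ _ _ _)]
  simp only [Hold, Fin.sum_univ_four, cons_val_zero, cons_val_one, cons_val_two, cons_val_three,
    head_cons, tail_cons, mul_zero, ne_eq, OfNat.ofNat_ne_zero, not_false_eq_true, zero_pow,
    add_zero]
  ring

/-- In the new coordinates the Hamiltonian becomes the partially reduced Hamiltonian;
in particular it is independent of `θ₁` and `θ₂`. -/
theorem Hold_comp_Phi (ν₁ ν₂ : ℝ) (hν₁ : 0 < ν₁) (hν₂ : 0 < ν₂)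
    (V : (Fin 3 → ℝ) → ℝ) (z : Fin 16 → ℝ)
    (hA : (z 0 * z 3 - z 1 * z 2) / 2 ≠ 0)
    (hψ : cos (2 * z 4) ≠ cos (2 * z 5)) :
    Hold ν₁ ν₂ V (Phi z) =
      (let q₁ := z 0; let q₂ := z 1; let q₃ := z 2; let q₄ := z 3
       let ψ₁ := z 4; let ψ₂ := z 5
       let p₁ := z 8; let p₂ := z 9; let p₃ := z 10; let p₄ := z 11
       let pψ₁ := z 12; let pψ₂ := z 13; let pθ₁ := z 14; let pθ₂ := z 15
       let A := (q₁ * q₄ - q₂ * q₃) / 2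
       let L₃ := q₁ * p₂ - q₂ * p₁ + q₃ * p₄ - q₄ * p₃
       let B := (L₃ * sin (2 * ψ₁) + 2 * (pθ₁ * sin ψ₁ * cos ψ₂ + pθ₂ * cos ψ₁ * sin ψ₂)) /
           (2 * A * (cos (2 * ψ₁) - cos (2 * ψ₂)))
       let C := (L₃ * sin (2 * ψ₂) + 2 * (pθ₁ * cos ψ₁ * sin ψ₂ + pθ₂ * sin ψ₁ * cos ψ₂)) /
           (2 * A * (cos (2 * ψ₁) - cos (2 * ψ₂)))
       let ftilde : ℝ → ℝ → ℝ := fun qi qj =>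
         (qi * B - qj * pψ₁ / (2 * A)) ^ 2 + (-qj * C + qi * pψ₂ / (2 * A)) ^ 2
       (1 / (2 * ν₁)) * (p₁ ^ 2 + p₂ ^ 2 + ftilde q₃ q₄) +
         (1 / (2 * ν₂)) * (p₃ ^ 2 + p₄ ^ 2 + ftilde q₁ q₂) +
         V ![q₁ ^ 2 + q₂ ^ 2, q₃ ^ 2 + q₄ ^ 2, q₁ * q₃ + q₂ * q₄]) :=
  Hold_comp_Phi_general ν₁ ν₂ V z

end
end

section
/- Let C = (c₁,…,c_k) : ℝ^{2d} → ℝ^k be C¹ and let z ∈ ℝ^{2d}. If the k×k matrix 𝒜(z) with entries 𝒜(z)_{ij} = ω(X_{c_i}(z), X_{c_j}(z)) is invertible, then k is even, DC(z) : ℝ^{2d} → ℝ^k is surjective, and the restriction of ω to the subspace ker DC(z) is nondegenerate; that is, ker DC(z) is a symplectic subspace of (ℝ^{2d}, ω). -/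
open Matrix

noncomputable section

/-- The canonical symplectic matrix `J = [[0, I_d], [−I_d, 0]]` on `ℝ^{2d}`. -/
def Jmat (d : ℕ) : Matrix (Fin (2 * d)) (Fin (2 * d)) ℝ :=
  Matrix.of fun i j => if (i : ℕ) + d = (j : ℕ) then 1
    else if (j : ℕ) + d = (i : ℕ) then -1 else 0

/-- The standard symplectic bilinear form `ω(v,w) = vᵀJw`. -/
def symOmega (d : ℕ) (v w : Fin (2 * d) → ℝ) : ℝ :=
  v ⬝ᵥ (Jmat d).mulVec w

/-- The Hamiltonian vector field `X_g(z) = J∇g(z)`. -/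
def Xham (d : ℕ) (g : (Fin (2 * d) → ℝ) → ℝ) (z : Fin (2 * d) → ℝ) :
    Fin (2 * d) → ℝ :=
  (Jmat d).mulVec fun j => fderiv ℝ g z (Pi.single j 1)

lemma Jmat_transpose (d : ℕ) (hd : 0 < d) : (Jmat d)ᵀ = -(Jmat d) := by
  ext i j
  simp only [Matrix.transpose_apply, Matrix.neg_apply, Jmat, Matrix.of_apply]
  have hi := i.isLt; have hj := j.isLt
  split_ifs <;> first | ring1 | (exfalso; omega)

lemma Jmat_mul_Jmat (d : ℕ) (hd : 0 < d) : Jmat d * Jmat d = -1 := by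
  ext i j
  rw [Matrix.mul_apply]
  have hi := i.isLt; have hj := j.isLt
  by_cases hid : (i : ℕ) < d
  · have hl : (i : ℕ) + d < 2 * d := by omega
    rw [Finset.sum_eq_single (⟨(i:ℕ)+d, hl⟩ : Fin (2*d))]
    · simp only [Jmat, Matrix.of_apply, Matrix.neg_apply, Matrix.one_apply, Fin.ext_iff,
        Fin.val_mk]
      split_ifs <;> first | ring1 | (exfalso; omega)
    · intro b _ hb
      have hb' : (b:ℕ) ≠ (i:ℕ) + d := by simpa [Fin.ext_iff] using hb
      have hbl := b.isLt
      simp only [Jmat, Matrix.of_apply]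
      split_ifs <;> first | ring1 | (exfalso; omega)
    · intro h; exact absurd (Finset.mem_univ _) h
  · have hl : (i : ℕ) - d < 2 * d := by omega
    rw [Finset.sum_eq_single (⟨(i:ℕ)-d, hl⟩ : Fin (2*d))]
    · simp only [Jmat, Matrix.of_apply, Matrix.neg_apply, Matrix.one_apply, Fin.ext_iff,
        Fin.val_mk]
      split_ifs <;> first | ring1 | (exfalso; omega)
    · intro b _ hb
      have hb' : (b:ℕ) ≠ (i:ℕ) - d := by simpa [Fin.ext_iff] using hb
      have hbl := b.isLt
      simp only [Jmat, Matrix.of_apply]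
      split_ifs <;> first | ring1 | (exfalso; omega)
    · intro h; exact absurd (Finset.mem_univ _) h

lemma fderiv_pi_repr {d : ℕ} (g : (Fin (2*d) → ℝ) → ℝ) (z w : Fin (2*d) → ℝ) :
    fderiv ℝ g z w = ∑ j, fderiv ℝ g z (Pi.single j 1) * w j := by
  have hw : w = ∑ j, w j • (Pi.single j 1 : Fin (2*d) → ℝ) := by
    ext j'
    simp [Pi.single_apply]
  conv_lhs => rw [hw]
  rw [map_sum]
  simp [mul_comm]

lemma symOmega_skew {d : ℕ} (hd : 0 < d) (v w : Fin (2*d) → ℝ) :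
    symOmega d w v = - symOmega d v w := by
  unfold symOmega
  rw [Matrix.dotProduct_mulVec, ← Matrix.mulVec_transpose, Jmat_transpose d hd,
      Matrix.neg_mulVec, neg_dotProduct, dotProduct_comm]

lemma symOmega_Xham {d : ℕ} (hd : 0 < d) (g : (Fin (2*d) → ℝ) → ℝ)
    (z w : Fin (2*d) → ℝ) :
    symOmega d (Xham d g z) w = fderiv ℝ g z w := by
  unfold symOmega Xham
  rw [Matrix.dotProduct_mulVec, ← Matrix.mulVec_transpose, Jmat_transpose d hd,
      Matrix.neg_mulVec, Matrix.mulVec_mulVec, Jmat_mul_Jmat d hd,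
      Matrix.neg_mulVec, Matrix.one_mulVec, neg_neg, fderiv_pi_repr]
  rfl

def omegaLin (d : ℕ) (v : Fin (2*d) → ℝ) : (Fin (2*d) → ℝ) →ₗ[ℝ] ℝ where
  toFun w := symOmega d v w
  map_add' x y := by simp only [symOmega, Matrix.mulVec_add, dotProduct_add]
  map_smul' r x := by
    simp only [symOmega, Matrix.mulVec_smul, dotProduct_smul, RingHom.id_apply]


/-- If the matrix `𝒜(z) = (ω(X_{c_i}(z), X_{c_j}(z)))_{ij}` is invertible, then `k` is
even, `DC(z)` is surjective, and `ker DC(z)` is a symplectic subspace of `(ℝ^{2d}, ω)`. -/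
theorem ker_DC_symplectic (d k : ℕ) (hk : 0 < k) (hkd : k < d)
    (c : Fin k → (Fin (2 * d) → ℝ) → ℝ) (hc : ∀ i, ContDiff ℝ 1 (c i))
    (z : Fin (2 * d) → ℝ)
    (hA : IsUnit (Matrix.of fun i j : Fin k =>
      symOmega d (Xham d (c i) z) (Xham d (c j) z))) :
    Even k ∧
    Function.Surjective (fun v : Fin (2 * d) → ℝ => fun i : Fin k => fderiv ℝ (c i) z v) ∧
    ∀ v : Fin (2 * d) → ℝ, (∀ i, fderiv ℝ (c i) z v = 0) →
      (∀ w : Fin (2 * d) → ℝ, (∀ i, fderiv ℝ (c i) z w = 0) → symOmega d v w = 0) →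
      v = 0 := by
  have hd : 0 < d := by omega
  set X : Fin k → Fin (2*d) → ℝ := fun i => Xham d (c i) z with hX
  set A : Matrix (Fin k) (Fin k) ℝ :=
    Matrix.of (fun i j => symOmega d (Xham d (c i) z) (Xham d (c j) z)) with hAdef
  have hAentry : ∀ i j, A i j = fderiv ℝ (c i) z (X j) := by
    intro i j
    simp only [hAdef, Matrix.of_apply, hX]
    exact symOmega_Xham hd (c i) z (X j)
  have hdet : IsUnit A.det := (Matrix.isUnit_iff_isUnit_det A).mp hA
  have hskew : Aᵀ = -A := by
    ext i j
    simp only [Matrix.transpose_apply, Matrix.neg_apply, hAdef, Matrix.of_apply]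
    exact symOmega_skew hd _ _
  -- sum computation helper
  have hmv : ∀ (b : Fin k → ℝ) (i : Fin k),
      fderiv ℝ (c i) z (∑ j, b j • X j) = A.mulVec b i := by
    intro b i
    rw [map_sum]
    simp only [_root_.map_smul, smul_eq_mul]
    rw [Matrix.mulVec]
    simp only [dotProduct]
    exact Finset.sum_congr rfl fun j _ => by rw [hAentry i j]; ring
  refine ⟨?_, ?_, ?_⟩
  · -- Even k
    by_contra hodd
    have hodd' : Odd k := Nat.odd_iff.mpr (Nat.not_even_iff.mp hodd)
    have h1 : A.det = (-1)^k * A.det := by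
      conv_lhs => rw [← Matrix.det_transpose, hskew]
      rw [Matrix.det_neg, Fintype.card_fin]
    rw [Odd.neg_one_pow hodd'] at h1
    have h2 : A.det ≠ 0 := hdet.ne_zero
    have h3 : A.det = 0 := by linarith
    exact h2 h3
  · intro y
    refine ⟨∑ j, (A⁻¹.mulVec y) j • X j, ?_⟩
    funext i
    show fderiv ℝ (c i) z (∑ j, (A⁻¹.mulVec y) j • X j) = y i
    rw [hmv, Matrix.mulVec_mulVec, Matrix.mul_nonsing_inv A hdet, Matrix.one_mulVec]
  · intro v hv hw
    have hXv : ∀ j, symOmega d v (X j) = 0 := by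
      intro j
      rw [symOmega_skew hd (X j) v, symOmega_Xham hd (c j) z v, hv j, neg_zero]
    have hall : ∀ u : Fin (2*d) → ℝ, symOmega d v u = 0 := by
      intro u
      set b : Fin k → ℝ := A⁻¹.mulVec (fun i => fderiv ℝ (c i) z u) with hb
      set w : Fin (2*d) → ℝ := u - ∑ j, b j • X j with hwdef
      have hwker : ∀ i, fderiv ℝ (c i) z w = 0 := by
        intro i
        rw [hwdef, map_sub, hmv, hb, Matrix.mulVec_mulVec,
            Matrix.mul_nonsing_inv A hdet, Matrix.one_mulVec, sub_self]
      have hu : u = w + ∑ j, b j • X j := by rw [hwdef]; abel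
      have hsplit : symOmega d v u = symOmega d v w + ∑ j, b j * symOmega d v (X j) := by
        rw [hu]
        show omegaLin d v (w + ∑ j, b j • X j) = _
        rw [map_add, map_sum]
        simp only [_root_.map_smul, smul_eq_mul]
        rfl
      rw [hsplit, hw w hwker]
      simp [hXv]
    have h0 : symOmega d v (-(Jmat d).mulVec v) = v ⬝ᵥ v := by
      unfold symOmega
      rw [Matrix.mulVec_neg, Matrix.mulVec_mulVec, Jmat_mul_Jmat d hd,
          Matrix.neg_mulVec, Matrix.one_mulVec, neg_neg]
    have := hall (-(Jmat d).mulVec v)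
    rw [h0] at this
    exact (dotProduct_self_eq_zero).mp this

end
end
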